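/- arXiv:2010.09339 — 2 statements merged into one kernel-verified Lean document; each statement's English description precedes it below -/
import Mathlib

section
/- Let d ≥ 1, 1 ≤ p ≤ u < ∞, 1 ≤ q ≤ ∞ and 0 < s < 1, and take N = 1. Then there exists a constant C > 0 such that for every real-valued locally integrable f on ℝ^d the following two inequalities hold: ‖|f|‖_{E^s_{u,p,q}}^{(1)} ≤ C ‖f‖_{E^s_{u,p,q}}^{(1)} and ‖|f|‖_{N^s_{u,p,q}}^{(1)} ≤ C ‖f‖_{N^s_{u,p,q}}^{(1)} (the inequalities being between values in [0,∞]). In particular the map f ↦ |f| is bounded on both the Triebel–Lizorkin–Morrey space E^s_{u,p,q}(ℝ^d) and the Besov–Morrey space N^s_{u,p,q}(ℝ^d) for 0 < s < 1. -/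
open MeasureTheory ENNReal

noncomputable section

/-- `ℝ^d` as a Euclidean space. -/
abbrev Ed (d : ℕ) := EuclideanSpace ℝ (Fin d)

/-- Morrey norm `‖g‖_{M^u_p}` of a nonnegative (extended-real-valued) function. -/
def morreyNormE (d : ℕ) (u p : ℝ) (g : Ed d → ℝ≥0∞) : ℝ≥0∞ :=
  ⨆ (y : Ed d) (r : ℝ) (_ : 0 < r),
    (volume (Metric.ball y r)) ^ (1 / u - 1 / p) *
      (∫⁻ x in Metric.ball y r, g x ^ p) ^ (1 / p)

/-- Morrey norm of a real-valued function. -/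
def morreyNorm (d : ℕ) (u p : ℝ) (f : Ed d → ℝ) : ℝ≥0∞ :=
  morreyNormE d u p fun x => ENNReal.ofReal |f x|

/-- `N`-th difference `Δ^N_h f (x)`. -/
def deltaN (d : ℕ) (N : ℕ) (f : Ed d → ℝ) (h x : Ed d) : ℝ :=
  ∑ l ∈ Finset.range (N + 1),
    (-1 : ℝ) ^ (N - l) * (N.choose l : ℝ) * f (x + (l : ℝ) • h)

/-- `∫_{B(0,t)} |Δ^N_h f(x)| dh`. -/
def diffInt (d N : ℕ) (f : Ed d → ℝ) (t : ℝ) (x : Ed d) : ℝ≥0∞ :=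
  ∫⁻ h in Metric.ball (0 : Ed d) t, ENNReal.ofReal |deltaN d N f h x|

/-- Triebel-Lizorkin-Morrey difference norm `‖f‖_{E^s_{u,p,q}}^{(N)}`. -/
def tlmNorm (d : ℕ) (s u p : ℝ) (q : ℝ≥0∞) (N : ℕ) (f : Ed d → ℝ) : ℝ≥0∞ :=
  morreyNorm d u p f +
    morreyNormE d u p (fun x =>
      if q = ∞ then
        ⨆ (t : ℝ) (_ : 0 < t),
          ENNReal.ofReal (t ^ (-s)) * (ENNReal.ofReal (t ^ (-(d : ℝ))) * diffInt d N f t x)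
      else
        (∫⁻ t in Set.Ioi (0 : ℝ),
            ENNReal.ofReal (t ^ (-(s * q.toReal))) *
              (ENNReal.ofReal (t ^ (-(d : ℝ))) * diffInt d N f t x) ^ q.toReal /
            ENNReal.ofReal t) ^ (1 / q.toReal))

/-- Besov-Morrey difference norm `‖f‖_{N^s_{u,p,q}}^{(N)}`. -/
def bmNorm (d : ℕ) (s u p : ℝ) (q : ℝ≥0∞) (N : ℕ) (f : Ed d → ℝ) : ℝ≥0∞ :=
  morreyNorm d u p f +
    (if q = ∞ then
      ⨆ (t : ℝ) (_ : 0 < t),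
        ENNReal.ofReal (t ^ (-s - (d : ℝ))) * morreyNormE d u p (diffInt d N f t)
    else
      (∫⁻ t in Set.Ioi (0 : ℝ),
          ENNReal.ofReal (t ^ (-(s * q.toReal) - (d : ℝ) * q.toReal)) *
            (morreyNormE d u p (diffInt d N f t)) ^ q.toReal /
          ENNReal.ofReal t) ^ (1 / q.toReal))


lemma deltaN_one (d : ℕ) (f : Ed d → ℝ) (h x : Ed d) :
    deltaN d 1 f h x = f (x + h) - f x := by
  simp [deltaN, Finset.sum_range_succ]
  ring_nf

lemma deltaN_abs_le (d : ℕ) (f : Ed d → ℝ) (h x : Ed d) :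
    |deltaN d 1 (fun y => |f y|) h x| ≤ |deltaN d 1 f h x| := by
  rw [deltaN_one, deltaN_one]
  exact abs_abs_sub_abs_le_abs_sub _ _

lemma diffInt_abs_le (d : ℕ) (f : Ed d → ℝ) (t : ℝ) (x : Ed d) :
    diffInt d 1 (fun y => |f y|) t x ≤ diffInt d 1 f t x := by
  refine lintegral_mono fun h => ?_
  exact ENNReal.ofReal_le_ofReal (deltaN_abs_le d f h x)

lemma morreyNormE_mono (d : ℕ) (u p : ℝ) (hp : 0 ≤ p) {g g' : Ed d → ℝ≥0∞}
    (hgg : ∀ x, g x ≤ g' x) : morreyNormE d u p g ≤ morreyNormE d u p g' := by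
  unfold morreyNormE
  gcongr with y r hr x
  exact hgg x

/-- For `0 < s < 1` the map `f ↦ |f|` is bounded (with `N = 1` in the difference
characterization) on both `E^s_{u,p,q}(ℝ^d)` and `N^s_{u,p,q}(ℝ^d)`. -/
theorem abs_bounded_small_smoothness
    (d : ℕ) (hd : 1 ≤ d)
    (p u s : ℝ) (q : ℝ≥0∞)
    (hp : 1 ≤ p) (hpu : p ≤ u)
    (hq : 1 ≤ q) (hs0 : 0 < s) (hs1 : s < 1) :
    ∃ C : ℝ, 0 < C ∧ ∀ f : Ed d → ℝ, LocallyIntegrable f volume →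
      (tlmNorm d s u p q 1 (fun x => |f x|) ≤ ENNReal.ofReal C * tlmNorm d s u p q 1 f ∧
       bmNorm d s u p q 1 (fun x => |f x|) ≤ ENNReal.ofReal C * bmNorm d s u p q 1 f) := by
  refine ⟨1, one_pos, fun f hf => ?_⟩
  have hm : morreyNorm d u p (fun x => |f x|) = morreyNorm d u p f := by
    simp [morreyNorm, abs_abs]
  have hp0 : (0:ℝ) ≤ p := le_trans zero_le_one hp
  have hdi := diffInt_abs_le d f
  constructor
  · rw [ENNReal.ofReal_one, one_mul, tlmNorm, tlmNorm, hm]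
    gcongr
    refine morreyNormE_mono d u p hp0 fun x => ?_
    split_ifs
    · gcongr with t ht
      exact hdi t x
    · gcongr with t
      exact hdi t x
  · rw [ENNReal.ofReal_one, one_mul, bmNorm, bmNorm, hm]
    gcongr
    split_ifs
    · gcongr with t ht
      exact morreyNormE_mono d u p hp0 fun x => hdi t x
    · gcongr with t
      exact morreyNormE_mono d u p hp0 fun x => hdi t x

end
end

section
/- Let f : ℝ^d → ℝ be real-analytic on all of ℝ^d and not identically zero. Then its zero set Z(f) := { x ∈ ℝ^d : f(x) = 0 } is the union of countably many compact sets each of which has finite (d−1)-dimensional Hausdorff measure; in particular the Hausdorff dimension of Z(f) does not exceed d − 1. -/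
open MeasureTheory ENNReal

/-!
At a zero `x` of `f` some iterated derivative of `f` is nonzero: otherwise `f` vanishes near `x`
by its Taylor expansion, hence everywhere by the identity theorem. Going up to the first nonzero
one, `x` becomes a regular zero (`g x = 0`, `Dg x ≠ 0`) of one of the countably many analytic
functions `g = Dⁿf(·)(b_{v 1}, …, b_{v n})`, `b` a basis. Near a regular zero, with `Dg x v = 1`,
the map `y ↦ y + (g y - Dg x y) • v` sends `{g = 0}` into the hyperplane `ker Dg x` and has
derivative the identity at `x`, so its local inverse is Lipschitz and `{g = 0}` has locally
finite `(d - 1)`-dimensional Hausdorff measure. By Lindelöf, countably many compact pieces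
of finite measure cover it.
-/

open Set Filter Topology Metric Module

section Covering

variable {X : Type*} [TopologicalSpace X] [MeasurableSpace X]

def CoveredByFiniteMeasureCompacts (μ : Measure X) (s : Set X) : Prop :=
  ∃ 𝒦 : Set (Set X), 𝒦.Countable ∧ (∀ K ∈ 𝒦, IsCompact K ∧ μ K < ∞) ∧ s ⊆ ⋃₀ 𝒦

namespace CoveredByFiniteMeasureCompacts

variable {μ : Measure X} {s t : Set X}

theorem mono (h : CoveredByFiniteMeasureCompacts μ s) (hts : t ⊆ s) :
    CoveredByFiniteMeasureCompacts μ t :=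
  let ⟨𝒦, h𝒦c, h𝒦, hs⟩ := h
  ⟨𝒦, h𝒦c, h𝒦, hts.trans hs⟩

theorem iUnion {ι : Sort*} [Countable ι] {s : ι → Set X}
    (h : ∀ i, CoveredByFiniteMeasureCompacts μ (s i)) :
    CoveredByFiniteMeasureCompacts μ (⋃ i, s i) := by
  choose 𝒦 h𝒦c h𝒦 hs using h
  refine ⟨⋃ i, 𝒦 i, countable_iUnion h𝒦c, fun K hK => ?_, ?_⟩
  · obtain ⟨i, hi⟩ := mem_iUnion.1 hK
    exact h𝒦 i K hi
  · rw [sUnion_iUnion]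
    exact iUnion_mono hs

theorem of_forall_mem_nhdsWithin [SecondCountableTopology X]
    (h : ∀ x ∈ s, ∃ K ∈ 𝓝[s] x, IsCompact K ∧ μ K < ∞) :
    CoveredByFiniteMeasureCompacts μ s := by
  choose! K hKx hK using h
  obtain ⟨c, hcs, hcc, hsc⟩ := TopologicalSpace.countable_cover_nhdsWithin hKx
  refine ⟨K '' c, hcc.image K, forall_mem_image.2 fun x hx => hK x (hcs hx), ?_⟩
  rwa [sUnion_image]

theorem exists_eq_iUnion (h : CoveredByFiniteMeasureCompacts μ s) (hs : IsClosed s) :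
    ∃ K : ℕ → Set X, (∀ n, IsCompact (K n)) ∧ (∀ n, μ (K n) < ∞) ∧ s = ⋃ n, K n := by
  obtain ⟨𝒦, h𝒦c, h𝒦, hs𝒦⟩ := h
  -- `∅` is added so that the family is nonempty and can be indexed by `ℕ`.
  obtain ⟨e, he⟩ := (h𝒦c.insert ∅).exists_eq_range (insert_nonempty ∅ 𝒦)
  have he𝒦 : ∀ n, IsCompact (e n) ∧ μ (e n) < ∞ := by
    intro n
    rcases (he ▸ mem_range_self n : e n ∈ insert ∅ 𝒦) with hn | hn
    · simp [hn]
    · exact h𝒦 _ hn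
  refine ⟨fun n => e n ∩ s, fun n => (he𝒦 n).1.inter_right hs,
    fun n => (measure_mono inter_subset_left).trans_lt (he𝒦 n).2, ?_⟩
  refine Subset.antisymm (fun x hx => ?_) (iUnion_subset fun n => inter_subset_right)
  obtain ⟨K, hK, hxK⟩ := hs𝒦 hx
  obtain ⟨n, rfl⟩ : K ∈ range e := he ▸ mem_insert_of_mem ∅ hK
  exact mem_iUnion.2 ⟨n, hxK, hx⟩

end CoveredByFiniteMeasureCompacts

end Covering

section Dimension

variable {X : Type*} [EMetricSpace X] [MeasurableSpace X] [BorelSpace X]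

theorem dimH_le_ofReal_of_hausdorffMeasure_ne_top {s : Set X} {r : ℝ} (h : μH[r] s ≠ ∞) :
    dimH s ≤ ENNReal.ofReal r :=
  dimH_le_of_hausdorffMeasure_ne_top <|
    ne_top_of_le_ne_top h (Measure.hausdorffMeasure_mono (le_max_left r 0) s)

theorem CoveredByFiniteMeasureCompacts.dimH_le {s : Set X} {r : ℝ}
    (h : CoveredByFiniteMeasureCompacts μH[r] s) : dimH s ≤ ENNReal.ofReal r := by
  obtain ⟨𝒦, h𝒦c, h𝒦, hs⟩ := h
  calc dimH s ≤ dimH (⋃₀ 𝒦) := dimH_mono hs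
    _ = ⨆ K ∈ 𝒦, dimH K := dimH_sUnion h𝒦c
    _ ≤ ENNReal.ofReal r :=
      iSup₂_le fun K hK => dimH_le_ofReal_of_hausdorffMeasure_ne_top (h𝒦 K hK).2.ne

end Dimension

section Hypersurface

variable {E : Type*} [NormedAddCommGroup E] [NormedSpace ℝ E] [FiniteDimensional ℝ E]
  [MeasurableSpace E] [BorelSpace E]

theorem Submodule.hausdorffMeasure_finrank_lt_top (P : Submodule ℝ E) {S : Set E}
    (hS : Bornology.IsBounded S) (hSP : S ⊆ P) : μH[finrank ℝ P] S < ∞ := by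
  have hval : Isometry (Subtype.val : P → E) := isometry_subtype_coe
  have hpre : μH[finrank ℝ P] ((↑) ⁻¹' S : Set P) = μH[finrank ℝ P] S := by
    rw [hval.hausdorffMeasure_preimage (Or.inl (Nat.cast_nonneg _)), Subtype.range_coe,
      inter_eq_left.2 hSP]
  rw [← hpre]
  exact (hval.antilipschitz.isBounded_preimage hS).measure_lt_top

theorem hausdorffMeasure_lt_top_of_subset_ker {ℓ : E →L[ℝ] ℝ} (hℓ : ℓ ≠ 0) {S : Set E}
    (hS : Bornology.IsBounded S) (hSℓ : S ⊆ {y | ℓ y = 0}) :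
    μH[(finrank ℝ E : ℝ) - 1] S < ∞ := by
  have hrank := Module.Dual.finrank_ker_add_one_of_ne_zero (f := (ℓ : E →ₗ[ℝ] ℝ))
    (by exact_mod_cast hℓ)
  rw [← hrank, Nat.cast_add_one, add_sub_cancel_right]
  exact (LinearMap.ker (ℓ : E →ₗ[ℝ] ℝ)).hausdorffMeasure_finrank_lt_top hS hSℓ

theorem HasStrictFDerivAt.exists_mem_nhds_hausdorffMeasure_zeroSet_lt_top {g : E → ℝ}
    {ℓ : E →L[ℝ] ℝ} {x : E} (hg : HasStrictFDerivAt g ℓ x) (hℓ : ℓ ≠ 0) :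
    ∃ U ∈ 𝓝 x, μH[(finrank ℝ E : ℝ) - 1] ({y | g y = 0} ∩ U) < ∞ := by
  obtain ⟨w, hw⟩ := DFunLike.ne_iff.1 hℓ
  have hdim : 0 ≤ (finrank ℝ E : ℝ) - 1 := sub_nonneg.2 <| Nat.one_le_cast.2 <|
    finrank_pos_iff_exists_ne_zero.2 ⟨w, fun h => hw (by simp [h])⟩
  set v := (ℓ w)⁻¹ • w
  have hv : ℓ v = 1 := by simp [v, inv_mul_cancel₀ hw]
  set Φ : E → E := fun y => y + (g y - ℓ y) • v
  have hΦℓ : ∀ y, ℓ (Φ y) = g y := fun y => by simp [Φ, hv]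
  have hΦ : HasStrictFDerivAt Φ ((ContinuousLinearEquiv.refl ℝ E : E ≃L[ℝ] E) : E →L[ℝ] E) x := by
    refine ((hasStrictFDerivAt_id x).add
      ((hg.sub ℓ.hasStrictFDerivAt).smul_const v)).congr_fderiv ?_
    ext; simp
  set ψ := hΦ.localInverse Φ _ x
  obtain ⟨K, t, ht, hψ⟩ := hΦ.to_localInverse.exists_lipschitzOnWith
  set T := t ∩ ball (Φ x) 1
  have hT : T ∈ 𝓝 (Φ x) := inter_mem ht (ball_mem_nhds _ one_pos)
  refine ⟨Φ ⁻¹' T ∩ {y | ψ (Φ y) = y}, inter_mem (hΦ.continuousAt.preimage_mem_nhds hT)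
    hΦ.eventually_left_inverse, ?_⟩
  have hsub : {y | g y = 0} ∩ (Φ ⁻¹' T ∩ {y | ψ (Φ y) = y}) ⊆ ψ '' (T ∩ {z | ℓ z = 0}) := by
    rintro y ⟨hy0, hyT, hyψ⟩
    exact ⟨Φ y, ⟨hyT, (hΦℓ y).trans hy0⟩, hyψ⟩
  calc _ ≤ μH[(finrank ℝ E : ℝ) - 1] (ψ '' (T ∩ {z | ℓ z = 0})) := measure_mono hsub
    _ ≤ K ^ ((finrank ℝ E : ℝ) - 1) * μH[(finrank ℝ E : ℝ) - 1] (T ∩ {z | ℓ z = 0}) :=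
      (hψ.mono (inter_subset_left.trans inter_subset_left)).hausdorffMeasure_image_le hdim
    _ < ∞ := mul_lt_top (rpow_lt_top_of_nonneg hdim coe_ne_top)
      (hausdorffMeasure_lt_top_of_subset_ker hℓ
        (isBounded_ball.subset (inter_subset_left.trans inter_subset_right)) inter_subset_right)

end Hypersurface

section Analytic

variable {𝕜 E F : Type*} [NontriviallyNormedField 𝕜] [CharZero 𝕜]
  [NormedAddCommGroup E] [NormedSpace 𝕜 E] [NormedAddCommGroup F] [NormedSpace 𝕜 F]
  [CompleteSpace F] {f : E → F} {x : E}

theorem AnalyticAt.eventually_eq_zero_of_iteratedFDeriv_eq_zero (hf : AnalyticAt 𝕜 f x)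
    (h : ∀ n, iteratedFDeriv 𝕜 n f x = 0) : ∀ᶠ y in 𝓝 x, f y = 0 := by
  obtain ⟨p, r, hp⟩ := hf
  filter_upwards [eball_mem_nhds x hp.r_pos] with y hy
  have hsum := hp.hasSum_iteratedFDeriv (y := y - x) ?_
  · simp only [h, zero_apply, smul_zero, add_sub_cancel] at hsum
    exact hsum.unique hasSum_zero
  · rwa [mem_eball, edist_zero_right, ← edist_eq_enorm_sub]

theorem AnalyticOnNhd.exists_iteratedFDeriv_ne_zero [PreconnectedSpace E]
    (hf : AnalyticOnNhd 𝕜 f univ) (hf0 : f ≠ 0) (x : E) : ∃ n, iteratedFDeriv 𝕜 n f x ≠ 0 := by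
  by_contra! h
  exact hf0 <| funext fun y => hf.eqOn_zero_of_preconnected_of_eventuallyEq_zero
    isPreconnected_univ (mem_univ x)
    ((hf x trivial).eventually_eq_zero_of_iteratedFDeriv_eq_zero h) (mem_univ y)

theorem AnalyticOnNhd.exists_iteratedFDeriv_apply_basis_regular_zero [CompleteSpace 𝕜]
    [PreconnectedSpace E] {ι : Type*} (b : Basis ι 𝕜 E) {f : E → 𝕜}
    (hf : AnalyticOnNhd 𝕜 f univ) (hf0 : f ≠ 0) {x : E} (hx : f x = 0) :
    ∃ n, ∃ v : Fin n → ι, iteratedFDeriv 𝕜 n f x (b ∘ v) = 0 ∧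
      fderiv 𝕜 (fun y => iteratedFDeriv 𝕜 n f y (b ∘ v)) x ≠ 0 := by
  obtain ⟨n, hzero, hne⟩ := Nat.exists_not_and_succ_of_not_zero_of_exists
    (p := fun n => iteratedFDeriv 𝕜 n f x ≠ 0) (by simpa [← norm_eq_zero] using hx)
    (hf.exists_iteratedFDeriv_ne_zero hf0 x)
  rw [not_not] at hzero
  obtain ⟨w, hw⟩ : ∃ w : Fin (n + 1) → ι, iteratedFDeriv 𝕜 (n + 1) f x (b ∘ w) ≠ 0 := by
    by_contra! h
    exact hne (ContinuousMultilinearMap.toMultilinearMap_injective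
      (Basis.ext_multilinear (fun _ => b) h))
  refine ⟨n, Fin.tail w, by simp [hzero], fun h => hw ?_⟩
  have hdiff : DifferentiableAt 𝕜 (iteratedFDeriv 𝕜 n f) x :=
    (hf.iteratedFDeriv n x trivial).differentiableAt
  rw [iteratedFDeriv_succ_apply_left, ← fderiv_continuousMultilinear_apply_const_apply hdiff]
  exact congrArg (fun L => L (b (w 0))) h

end Analytic

section ZeroSet

variable {E : Type*} [NormedAddCommGroup E] [NormedSpace ℝ E] [FiniteDimensional ℝ E]
  [MeasurableSpace E] [BorelSpace E]

theorem ContDiff.coveredByFiniteMeasureCompacts_regularZeros {g : E → ℝ} (hg : ContDiff ℝ 1 g) :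
    CoveredByFiniteMeasureCompacts μH[(finrank ℝ E : ℝ) - 1]
      {x | g x = 0 ∧ fderiv ℝ g x ≠ 0} := by
  refine .of_forall_mem_nhdsWithin fun x ⟨_, hx⟩ => ?_
  obtain ⟨U, hU, hμU⟩ :=
    (hg.hasStrictFDerivAt one_ne_zero).exists_mem_nhds_hausdorffMeasure_zeroSet_lt_top hx
  obtain ⟨r, hr, hrU⟩ := nhds_basis_closedBall.mem_iff.1 hU
  refine ⟨{y | g y = 0} ∩ closedBall x r, inter_mem
      (mem_of_superset self_mem_nhdsWithin fun y hy => hy.1)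
      (mem_nhdsWithin_of_mem_nhds (closedBall_mem_nhds x hr)),
    (isCompact_closedBall x r).inter_left (isClosed_eq hg.continuous continuous_const),
    (measure_mono (inter_subset_inter_right _ hrU)).trans_lt hμU⟩

theorem AnalyticOnNhd.coveredByFiniteMeasureCompacts_zeroSet {f : E → ℝ}
    (hf : AnalyticOnNhd ℝ f univ) (hf0 : f ≠ 0) :
    CoveredByFiniteMeasureCompacts μH[(finrank ℝ E : ℝ) - 1] {x | f x = 0} := by
  set b := finBasis ℝ E
  refine (CoveredByFiniteMeasureCompacts.iUnion fun p : Σ n, Fin n → Fin (finrank ℝ E) =>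
    ContDiff.coveredByFiniteMeasureCompacts_regularZeros
      (g := fun y => iteratedFDeriv ℝ p.1 f y (b ∘ p.2)) ?_).mono fun x hx => ?_
  · exact (ContinuousMultilinearMap.apply ℝ _ ℝ (b ∘ p.2)).contDiff.comp
      (hf.contDiff.iteratedFDeriv_right le_rfl)
  · obtain ⟨n, v, hv⟩ := hf.exists_iteratedFDeriv_apply_basis_regular_zero b hf0 hx
    exact mem_iUnion.2 ⟨⟨n, v⟩, hv⟩

end ZeroSet

/-- The zero set of a not-identically-zero real-analytic function on `ℝ^d` is a
countable union of compact sets of finite `(d−1)`-dimensional Hausdorff measure; in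
particular its Hausdorff dimension does not exceed `d − 1`. -/
theorem zero_set_of_real_analytic
    (d : ℕ) (f : EuclideanSpace ℝ (Fin d) → ℝ)
    (hf : AnalyticOnNhd ℝ f Set.univ)
    (hf0 : f ≠ fun _ => 0) :
    (∃ K : ℕ → Set (EuclideanSpace ℝ (Fin d)),
      (∀ n, IsCompact (K n)) ∧
      (∀ n, μH[(d : ℝ) - 1] (K n) < ∞) ∧
      {x | f x = 0} = ⋃ n, K n) ∧
    dimH {x | f x = 0} ≤ (d : ℝ≥0∞) - 1 := by
  have hcover := hf.coveredByFiniteMeasureCompacts_zeroSet hf0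
  rw [finrank_euclideanSpace_fin] at hcover
  refine ⟨hcover.exists_eq_iUnion (isClosed_eq hf.continuous continuous_const), ?_⟩
  calc dimH {x | f x = 0} ≤ ENNReal.ofReal ((d : ℝ) - 1) := hcover.dimH_le
    _ = (d : ℝ≥0∞) - 1 := by rw [ofReal_sub _ zero_le_one, ofReal_natCast, ofReal_one]
end
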